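/- arXiv:1912.00150 — 3 statements merged into one kernel-verified Lean document; each statement's English description precedes it below -/
import Mathlib

section
/- Almost sure convergence of the plug-in residual entropy: for fixed j ∈ [1, r-1], with a_{R,n}(p) = max_{k∈[j,r]} |p̂_n^{(k)}/P̄_n(x_j) - p_k/P̄(x_j)|, one has limsup_{n→∞} |ℛ_X^{(n)}(x_j) - ℛ_X(x_j)| / a_{R,n}(p) ≤ (1/P̄(x_j)) ∑_{k=j}^{r} |1 + log(p_k/P̄(x_j))| almost surely; in particular ℛ_X^{(n)}(x_j) → ℛ_X(x_j) a.s. -/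
/-!
The empirical frequencies and the empirical survival function are averages of indicators of
i.i.d. events, so by the strong law they converge almost surely to `p_k` and `P̄(x_j)`; hence
every plug-in ratio `p̂_n^{(k)} / P̄_n(x_j)` converges a.s. to `p_k / P̄(x_j) > 0`. The rest is
deterministic: by the mean value theorem for `t ↦ t log t`, whose derivative `1 + log t` is
continuous at every `a > 0`, `|q log q - a log a| ≤ (|1 + log a| + ε) |q - a|` once `q` is close
to `a`. Summing over `k` and dividing by the maximal deviation bounds the limsup by
`∑ |1 + log (p_k / P̄(x_j))|`, which is at most the stated constant because `P̄(x_j) ≤ 1`.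
-/

open MeasureTheory ProbabilityTheory Filter Finset Real
open scoped Topology

/-- Empirical relative frequency of the value `v` among the first `n` observations. -/
noncomputable def empFreq {Ω : Type*} (X : ℕ → Ω → ℝ) (v : ℝ) (n : ℕ) (ω : Ω) : ℝ :=
  (∑ i ∈ Finset.range n, if X i ω = v then (1 : ℝ) else 0) / n

/-- Empirical survival function at `t` of the first `n` observations. -/
noncomputable def empSurv {Ω : Type*} (X : ℕ → Ω → ℝ) (t : ℝ) (n : ℕ) (ω : Ω) : ℝ :=
  (∑ i ∈ Finset.range n, if t < X i ω then (1 : ℝ) else 0) / n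

lemma eventually_abs_mul_log_sub_le {a ε : ℝ} (ha : 0 < a) (hε : 0 < ε) :
    ∀ᶠ t in 𝓝 a, |t * log t - a * log a| ≤ (|1 + log a| + ε) * |t - a| := by
  have hcont : ContinuousAt (fun t => |1 + log t|) a :=
    (continuousAt_const.add (continuousAt_log ha.ne')).abs
  obtain ⟨δ, hδ, hclose⟩ := Metric.continuousAt_iff.mp hcont ε hε
  set B := Metric.ball a (min δ a)
  have hpos : ∀ t ∈ B, 0 < t := fun t ht => by
    have := (abs_lt.mp ((Real.dist_eq t a).symm.trans_lt ht)).1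
    linarith [min_le_right δ a]
  have hderiv : ∀ t ∈ B, ‖log t + 1‖ ≤ |1 + log a| + ε := fun t ht => by
    have := (abs_lt.mp (Real.dist_eq _ _ ▸ hclose (lt_of_lt_of_le ht (min_le_left δ a)))).2
    rw [norm_eq_abs, add_comm]
    linarith
  refine eventually_of_mem (Metric.ball_mem_nhds a (lt_min hδ ha)) fun t ht => ?_
  simpa only [norm_eq_abs] using
    (convex_ball a (min δ a)).norm_image_sub_le_of_norm_hasDerivWithin_le (f := fun u => u * log u)
    (fun u hu => (hasDerivAt_mul_log (hpos u hu).ne').hasDerivWithinAt) hderiv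
    (Metric.mem_ball_self (lt_min hδ ha)) ht

lemma abs_sum_sub_sum_le_mul_sup' {ι : Type*} {s : Finset ι} (hs : s.Nonempty) (f : ℝ → ℝ)
    {q a c : ι → ℝ} (hc : ∀ k ∈ s, 0 ≤ c k)
    (hf : ∀ k ∈ s, |f (q k) - f (a k)| ≤ c k * |q k - a k|) :
    |∑ k ∈ s, f (q k) - ∑ k ∈ s, f (a k)| ≤ (∑ k ∈ s, c k) * s.sup' hs (fun k => |q k - a k|) := by
  rw [← sum_sub_distrib, sum_mul]
  refine (abs_sum_le_sum_abs _ _).trans (sum_le_sum fun k hk => (hf k hk).trans ?_)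
  exact mul_le_mul_of_nonneg_left (le_sup' (fun k => |q k - a k|) hk) (hc k hk)

section PlugIn

variable {α ι : Type*} {l : Filter α} {s : Finset ι} {q : α → ι → ℝ} {a : ι → ℝ}

lemma tendsto_neg_sum_mul_log (ha : ∀ k ∈ s, 0 < a k)
    (hq : ∀ k ∈ s, Tendsto (fun n => q n k) l (𝓝 (a k))) :
    Tendsto (fun n => -∑ k ∈ s, q n k * log (q n k)) l (𝓝 (-∑ k ∈ s, a k * log (a k))) :=
  (tendsto_finsetSum _ fun k hk =>
    (hq k hk).mul ((continuousAt_log (ha k hk).ne').tendsto.comp (hq k hk))).neg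

lemma limsup_abs_neg_sum_mul_log_sub_div_le [l.NeBot] (hs : s.Nonempty)
    (ha : ∀ k ∈ s, 0 < a k) (hq : ∀ k ∈ s, Tendsto (fun n => q n k) l (𝓝 (a k))) :
    limsup (fun n => |(-∑ k ∈ s, q n k * log (q n k)) - (-∑ k ∈ s, a k * log (a k))|
        / s.sup' hs (fun k => |q n k - a k|)) l
      ≤ ∑ k ∈ s, |1 + log (a k)| := by
  have hsup : ∀ n, 0 ≤ s.sup' hs (fun k => |q n k - a k|) := fun n =>
    (abs_nonneg _).trans (le_sup' (fun k => |q n k - a k|) hs.choose_spec)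
  have hcard : (0 : ℝ) < #s := by exact_mod_cast hs.card_pos
  refine le_of_forall_pos_le_add fun δ hδ => ?_
  set ε := δ / #s
  have hε : 0 < ε := div_pos hδ hcard
  have hnear : ∀ᶠ n in l, ∀ k ∈ s,
      |q n k * log (q n k) - a k * log (a k)| ≤ (|1 + log (a k)| + ε) * |q n k - a k| :=
    (eventually_all_finset s).2 fun k hk =>
      (hq k hk).eventually (eventually_abs_mul_log_sub_le (ha k hk) hε)
  have hbound : ∀ᶠ n in l, |(-∑ k ∈ s, q n k * log (q n k)) - (-∑ k ∈ s, a k * log (a k))|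
      / s.sup' hs (fun k => |q n k - a k|) ≤ ∑ k ∈ s, (|1 + log (a k)| + ε) := by
    filter_upwards [hnear] with n hn
    refine div_le_of_le_mul₀ (hsup n) (sum_nonneg fun k _ => by positivity) ?_
    rw [neg_sub_neg, abs_sub_comm]
    exact abs_sum_sub_sum_le_mul_sup' hs (fun t => t * log t) (fun k _ => by positivity) hn
  calc _ ≤ ∑ k ∈ s, (|1 + log (a k)| + ε) :=
        limsup_le_of_le (isCoboundedUnder_le_of_le l fun n => div_nonneg (abs_nonneg _) (hsup n))
          hbound
    _ = ∑ k ∈ s, |1 + log (a k)| + δ := by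
        rw [sum_add_distrib, sum_const, nsmul_eq_mul, mul_div_cancel₀ _ hcard.ne']

end PlugIn

section StrongLaw

variable {Ω : Type*} [MeasurableSpace Ω] {μ : Measure Ω} [IsFiniteMeasure μ]

lemma ae_tendsto_avg_indicator {β : Type*} [MeasurableSpace β] {X : ℕ → Ω → β}
    (hmeas : ∀ i, Measurable (X i)) (hindep : iIndepFun X μ)
    (hident : ∀ i, Measure.map (X i) μ = Measure.map (X 0) μ) {A : Set β} (hA : MeasurableSet A) :
    ∀ᵐ ω ∂μ, Tendsto (fun n : ℕ => (∑ i ∈ range n, A.indicator (1 : β → ℝ) (X i ω)) / n) atTop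
      (𝓝 (μ.real (X 0 ⁻¹' A))) := by
  have hφ : Measurable (A.indicator (1 : β → ℝ)) := measurable_one.indicator hA
  have hY0 : A.indicator 1 ∘ X 0 = (X 0 ⁻¹' A).indicator (1 : Ω → ℝ) := by
    ext ω
    exact (Set.indicator_comp_right (X 0) (s := A) (g := 1)).symm
  have hslln := strong_law_ae_real (fun i => A.indicator 1 ∘ X i)
    (hY0 ▸ (integrable_const (1 : ℝ)).indicator (hmeas 0 hA))
    (fun i j hij => (hindep.indepFun hij).comp hφ hφ)
    (fun i => IdentDistrib.comp ⟨(hmeas i).aemeasurable, (hmeas 0).aemeasurable, hident i⟩ hφ)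
  rw [hY0, integral_indicator_one (hmeas 0 hA)] at hslln
  exact hslln

variable {X : ℕ → Ω → ℝ} (hmeas : ∀ i, Measurable (X i)) (hindep : iIndepFun X μ)
  (hident : ∀ i, Measure.map (X i) μ = Measure.map (X 0) μ)
include hmeas hindep hident

lemma ae_tendsto_empFreq (v : ℝ) :
    ∀ᵐ ω ∂μ, Tendsto (fun n => empFreq X v n ω) atTop (𝓝 (μ.real {ω | X 0 ω = v})) := by
  filter_upwards [ae_tendsto_avg_indicator hmeas hindep hident (measurableSet_singleton v)]
    with ω hω
  simp only [Set.indicator_apply, Set.mem_singleton_iff, Pi.one_apply] at hω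
  exact hω

lemma ae_tendsto_empSurv (t : ℝ) :
    ∀ᵐ ω ∂μ, Tendsto (fun n => empSurv X t n ω) atTop (𝓝 (μ.real {ω | t < X 0 ω})) := by
  filter_upwards [ae_tendsto_avg_indicator hmeas hindep hident (measurableSet_Ioi (a := t))]
    with ω hω
  simp only [Set.indicator_apply, Set.mem_Ioi, Pi.one_apply] at hω
  exact hω

end StrongLaw

theorem plugin_residual_entropy_as_general
    {Ω : Type*} [MeasurableSpace Ω] (μ : Measure Ω) [IsProbabilityMeasure μ]
    (r : ℕ) (x : ℕ → ℝ) (p : ℕ → ℝ)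
    (X : ℕ → Ω → ℝ)
    (hmeas : ∀ i, Measurable (X i))
    (hindep : iIndepFun X μ)
    (hident : ∀ i, Measure.map (X i) μ = Measure.map (X 0) μ)
    (hpmf : ∀ k ∈ Finset.Icc 1 r, μ {ω | X 0 ω = x k} = ENNReal.ofReal (p k))
    (hpos : ∀ k ∈ Finset.Icc 1 r, 0 < p k)
    (j : ℕ) (hj1 : 1 ≤ j) (hjr : j ≤ r - 1)
    (Pbar : ℝ)
    (hPbarpos : 0 < Pbar)
    (hsurv : μ {ω | x j < X 0 ω} = ENNReal.ofReal Pbar) :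
    (∀ᵐ ω ∂μ,
      Filter.limsup
        (fun n =>
          |(-∑ k ∈ Finset.Icc j r,
              (empFreq X (x k) n ω / empSurv X (x j) n ω)
                * Real.log (empFreq X (x k) n ω / empSurv X (x j) n ω))
            - (-∑ k ∈ Finset.Icc j r, (p k / Pbar) * Real.log (p k / Pbar))|
          / ((Finset.Icc j r).sup' (Finset.nonempty_Icc.mpr (le_trans hjr (Nat.sub_le r 1)))
              (fun k => |empFreq X (x k) n ω / empSurv X (x j) n ω - p k / Pbar|)))
        atTop
      ≤ (1 / Pbar) * ∑ k ∈ Finset.Icc j r, |1 + Real.log (p k / Pbar)|)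
    ∧ (∀ᵐ ω ∂μ,
        Tendsto
          (fun n =>
            -∑ k ∈ Finset.Icc j r,
              (empFreq X (x k) n ω / empSurv X (x j) n ω)
                * Real.log (empFreq X (x k) n ω / empSurv X (x j) n ω))
          atTop
          (nhds (-∑ k ∈ Finset.Icc j r, (p k / Pbar) * Real.log (p k / Pbar)))) := by
  have hsub : Icc j r ⊆ Icc 1 r := Icc_subset_Icc_left hj1
  have hsurv' : μ.real {ω | x j < X 0 ω} = Pbar := by
    rw [measureReal_def, hsurv, ENNReal.toReal_ofReal hPbarpos.le]
  have hratio : ∀ᵐ ω ∂μ, ∀ k ∈ Icc j r, Tendsto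
      (fun n => empFreq X (x k) n ω / empSurv X (x j) n ω) atTop (𝓝 (p k / Pbar)) := by
    refine (eventually_all_finset _).2 fun k hk => ?_
    filter_upwards [ae_tendsto_empFreq hmeas hindep hident (x k),
      ae_tendsto_empSurv hmeas hindep hident (x j)] with ω hfreq hsurvω
    rw [measureReal_def, hpmf k (hsub hk), ENNReal.toReal_ofReal (hpos k (hsub hk)).le] at hfreq
    exact hfreq.div (hsurv' ▸ hsurvω) hPbarpos.ne'
  have hlim_pos : ∀ k ∈ Icc j r, 0 < p k / Pbar := fun k hk => div_pos (hpos k (hsub hk)) hPbarpos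
  refine ⟨?_, ?_⟩
  · filter_upwards [hratio] with ω hω
    refine (limsup_abs_neg_sum_mul_log_sub_div_le _ hlim_pos hω).trans ?_
    exact le_mul_of_one_le_left (sum_nonneg fun k _ => abs_nonneg _)
      (one_le_one_div hPbarpos (hsurv' ▸ measureReal_le_one))
  · filter_upwards [hratio] with ω hω using tendsto_neg_sum_mul_log hlim_pos hω

/-- almost sure convergence of the plug-in residual entropy, with the
rate `limsup |ℛ_X^{(n)}(x_j) - ℛ_X(x_j)| / a_{R,n}(p) ≤ (1/P̄(x_j)) ∑_{k=j}^r
|1 + log (p_k / P̄(x_j))|`; in particular `ℛ_X^{(n)}(x_j) → ℛ_X(x_j)` a.s. -/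
theorem plugin_residual_entropy_as
    {Ω : Type*} [MeasurableSpace Ω] (μ : Measure Ω) [IsProbabilityMeasure μ]
    (r : ℕ) (x : ℕ → ℝ) (hx : StrictMonoOn x (Set.Icc 1 r)) (p : ℕ → ℝ)
    (X : ℕ → Ω → ℝ)
    (hmeas : ∀ i, Measurable (X i))
    (hindep : iIndepFun X μ)
    (hident : ∀ i, Measure.map (X i) μ = Measure.map (X 0) μ)
    (hpmf : ∀ k ∈ Finset.Icc 1 r, μ {ω | X 0 ω = x k} = ENNReal.ofReal (p k))
    (hpos : ∀ k ∈ Finset.Icc 1 r, 0 < p k)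
    (j : ℕ) (hj1 : 1 ≤ j) (hjr : j ≤ r - 1)
    (Pbar : ℝ) (hPbar : Pbar = ∑ k ∈ Finset.Icc (j + 1) r, p k)
    (hPbarpos : 0 < Pbar)
    (hsurv : μ {ω | x j < X 0 ω} = ENNReal.ofReal Pbar) :
    (∀ᵐ ω ∂μ,
      Filter.limsup
        (fun n =>
          |(-∑ k ∈ Finset.Icc j r,
              (empFreq X (x k) n ω / empSurv X (x j) n ω)
                * Real.log (empFreq X (x k) n ω / empSurv X (x j) n ω))
            - (-∑ k ∈ Finset.Icc j r, (p k / Pbar) * Real.log (p k / Pbar))|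
          / ((Finset.Icc j r).sup' (Finset.nonempty_Icc.mpr (le_trans hjr (Nat.sub_le r 1)))
              (fun k => |empFreq X (x k) n ω / empSurv X (x j) n ω - p k / Pbar|)))
        atTop
      ≤ (1 / Pbar) * ∑ k ∈ Finset.Icc j r, |1 + Real.log (p k / Pbar)|)
    ∧ (∀ᵐ ω ∂μ,
        Tendsto
          (fun n =>
            -∑ k ∈ Finset.Icc j r,
              (empFreq X (x k) n ω / empSurv X (x j) n ω)
                * Real.log (empFreq X (x k) n ω / empSurv X (x j) n ω))
          atTop
          (nhds (-∑ k ∈ Finset.Icc j r, (p k / Pbar) * Real.log (p k / Pbar)))) :=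
  plugin_residual_entropy_as_general μ r x p X hmeas hindep hident hpmf hpos j hj1 hjr Pbar hPbarpos
    hsurv
end

section
/- Almost sure convergence of the mean residual lifetime estimator: for fixed j ∈ [1,r-1], limsup_{n→∞} |μ_R^{(n)}(x_j) - μ_R(x_j)| / a_n(P̄) ≤ (r-j)/P̄(x_j) + (1/P̄(x_j)²) ∑_{k=j}^{r-1} P̄(x_k) almost surely, where a_n(P̄) = max_j |P̄_n(x_j) - P̄(x_j)|; in particular μ_R^{(n)}(x_j) → μ_R(x_j) a.s. -/
open MeasureTheory ProbabilityTheory Filter Finset Real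

open scoped Topology

/-!
By the strong law of large numbers applied to the indicators `1{x_k < X_i}`, each empirical
survival value `P̄_n(x_k)` converges almost surely to `P̄(x_k)`; the estimator is a continuous
function of these finitely many values, whence its consistency. For the rate, write
`E/S - T/P = (E - T)/S + T (P - S)/(S P)` with `S = P̄_n(x_j)`, `E = ∑ₖ P̄_n(x_k)`, so that
`|μ_R^{(n)}(x_j) - μ_R(x_j)| ≤ ((r - j)/P̄_n(x_j) + ∑ₖ P̄(x_k) / (P̄_n(x_j) P̄(x_j))) a_n(P̄)`,
and the bracket tends to the claimed constant.
-/

lemma empSurv_tendsto_ae {Ω : Type*} [MeasurableSpace Ω] {μ : Measure Ω} {X : ℕ → Ω → ℝ}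
    (hmeas : ∀ i, Measurable (X i)) (hindep : iIndepFun X μ)
    (hident : ∀ i, μ.map (X i) = μ.map (X 0)) {t : ℝ} (hfin : μ {ω | t < X 0 ω} ≠ ⊤) :
    ∀ᵐ ω ∂μ, Tendsto (fun n => empSurv X t n ω) atTop (𝓝 (μ.real {ω | t < X 0 ω})) := by
  set f : ℝ → ℝ := (Set.Ioi t).indicator 1
  have hf : Measurable f := measurable_const.indicator measurableSet_Ioi
  have hevent : MeasurableSet {ω | t < X 0 ω} := hmeas 0 measurableSet_Ioi
  have hf0 : f ∘ X 0 = {ω | t < X 0 ω}.indicator 1 := rfl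
  have hint : Integrable (f ∘ X 0) μ := by
    rw [hf0, integrable_indicator_iff hevent]
    exact integrableOn_const hfin
  have hmean : μ[f ∘ X 0] = μ.real {ω | t < X 0 ω} := by
    rw [hf0]
    exact integral_indicator_one hevent
  have hslln := strong_law_ae_real (fun i => f ∘ X i) hint
    (fun i k hik => (hindep.indepFun hik).comp hf hf)
    (fun i => (IdentDistrib.mk (hmeas i).aemeasurable (hmeas 0).aemeasurable (hident i)).comp hf)
  rw [hmean] at hslln
  filter_upwards [hslln] with ω hω
  simpa [empSurv, f, Set.indicator_apply] using hω

lemma abs_sum_sub_sum_le_card_nsmul {ι α : Type*} [AddCommGroup α] [LinearOrder α]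
    [IsOrderedAddMonoid α] {s : Finset ι} {f g : ι → α} {a : α}
    (h : ∀ k ∈ s, |f k - g k| ≤ a) :
    |∑ k ∈ s, f k - ∑ k ∈ s, g k| ≤ #s • a := by
  rw [← sum_sub_distrib]
  exact (abs_sum_le_sum_abs _ _).trans (sum_le_card_nsmul s _ a h)

lemma abs_one_div_mul_sub_le {S P E T m a : ℝ} (hS : 0 < S) (hP : 0 < P) (hT : 0 ≤ T)
    (hE : |E - T| ≤ m * a) (hSP : |S - P| ≤ a) :
    |1 / S * E - 1 / P * T| ≤ (m / S + T / (S * P)) * a := by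
  have hsplit : 1 / S * E - 1 / P * T = (E - T) / S + T * (P - S) / (S * P) := by
    field_simp
    ring
  calc |1 / S * E - 1 / P * T| = |(E - T) / S + T * (P - S) / (S * P)| := by rw [hsplit]
    _ ≤ |(E - T) / S| + |T * (P - S) / (S * P)| := abs_add_le _ _
    _ = |E - T| / S + T * |S - P| / (S * P) := by
        rw [abs_div, abs_div, abs_mul, abs_of_pos hS, abs_of_nonneg hT,
          abs_of_pos (mul_pos hS hP), abs_sub_comm P]
    _ ≤ m * a / S + T * a / (S * P) := by gcongr
    _ = (m / S + T / (S * P)) * a := by ring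

lemma limsup_div_le_of_le_mul {ι : Type*} {l : Filter ι} [l.NeBot] {u a h : ι → ℝ} {L : ℝ}
    (hu : ∀ i, 0 ≤ u i) (ha : ∀ i, 0 ≤ a i) (hh : Tendsto h l (𝓝 L))
    (hh0 : ∀ᶠ i in l, 0 ≤ h i) (hle : ∀ᶠ i in l, u i ≤ h i * a i) :
    limsup (fun i => u i / a i) l ≤ L := by
  -- where `a i = 0` the quotient is the junk value `0`, hence the need for `hh0`
  have hbound : ∀ᶠ i in l, u i / a i ≤ h i := by
    filter_upwards [hh0, hle] with i h0 hi
    exact div_le_of_le_mul₀ (ha i) h0 hi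
  calc limsup (fun i => u i / a i) l ≤ limsup h l :=
        limsup_le_limsup hbound
          (isCoboundedUnder_le_of_le l fun i => div_nonneg (hu i) (ha i)) hh.isBoundedUnder_le
    _ = L := hh.limsup_eq
lemma limsup_abs_ratio_sub_div_sup'_le {α ι : Type*} {l : Filter α} [l.NeBot]
    {F : α → ι → ℝ} {P : ι → ℝ} {I s : Finset ι} (hI : I.Nonempty) (hsI : s ⊆ I) {j : ι}
    (hjI : j ∈ I) (hPj : 0 < P j) (hPs : ∀ k ∈ s, 0 ≤ P k)
    (hFj : Tendsto (fun n => F n j) l (𝓝 (P j))) :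
    limsup (fun n => |1 / F n j * ∑ k ∈ s, F n k - 1 / P j * ∑ k ∈ s, P k|
        / I.sup' hI (fun k => |F n k - P k|)) l
      ≤ #s / P j + 1 / P j ^ 2 * ∑ k ∈ s, P k := by
  have hT : 0 ≤ ∑ k ∈ s, P k := sum_nonneg hPs
  have hlim : Tendsto (fun n => (#s : ℝ) / F n j + (∑ k ∈ s, P k) / (F n j * P j)) l
      (𝓝 ((#s : ℝ) / P j + (∑ k ∈ s, P k) / (P j * P j))) :=
    (tendsto_const_nhds.div hFj hPj.ne').add
      (tendsto_const_nhds.div (hFj.mul_const (P j)) (mul_pos hPj hPj).ne')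
  have hFpos : ∀ᶠ n in l, 0 < F n j := hFj.eventually (eventually_gt_nhds hPj)
  have hdev : ∀ n, ∀ k ∈ I, |F n k - P k| ≤ I.sup' hI (fun k => |F n k - P k|) :=
    fun n k hk => le_sup' (fun k => |F n k - P k|) hk
  refine le_of_le_of_eq ?_ (by ring : (#s : ℝ) / P j + (∑ k ∈ s, P k) / (P j * P j) = _)
  apply limsup_div_le_of_le_mul (fun _ => abs_nonneg _)
    (fun n => (abs_nonneg _).trans (hdev n j hjI)) hlim
  · filter_upwards [hFpos] with n hn
    exact add_nonneg (div_nonneg (Nat.cast_nonneg _) hn.le) (div_nonneg hT (mul_pos hn hPj).le)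
  · filter_upwards [hFpos] with n hn
    refine abs_one_div_mul_sub_le hn hPj hT ?_ (hdev n j hjI)
    rw [← nsmul_eq_mul]
    exact abs_sum_sub_sum_le_card_nsmul fun k hk => hdev n k (hsI hk)

theorem mean_residual_lifetime_estimator_as_general
    {Ω : Type*} [MeasurableSpace Ω] (μ : Measure Ω)
    (r : ℕ) (hr : 1 ≤ r - 1) (x : ℕ → ℝ)
    (X : ℕ → Ω → ℝ)
    (hmeas : ∀ i, Measurable (X i))
    (hindep : iIndepFun X μ)
    (hident : ∀ i, Measure.map (X i) μ = Measure.map (X 0) μ)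
    (Pbar : ℕ → ℝ)
    (hsurv : ∀ k ∈ Finset.Icc 1 (r - 1), μ {ω | x k < X 0 ω} = ENNReal.ofReal (Pbar k))
    (hpos : ∀ k ∈ Finset.Icc 1 (r - 1), 0 < Pbar k)
    (j : ℕ) (hj1 : 1 ≤ j) (hjr : j ≤ r - 1) :
    (∀ᵐ ω ∂μ,
      Filter.limsup
        (fun n =>
          |(1 / empSurv X (x j) n ω) * ∑ k ∈ Finset.Icc j (r - 1), empSurv X (x k) n ω
            - (1 / Pbar j) * ∑ k ∈ Finset.Icc j (r - 1), Pbar k|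
          / ((Finset.Icc 1 (r - 1)).sup' (Finset.nonempty_Icc.mpr hr)
              (fun k => |empSurv X (x k) n ω - Pbar k|)))
        atTop
      ≤ ((r : ℝ) - (j : ℝ)) / Pbar j
        + (1 / (Pbar j) ^ 2) * ∑ k ∈ Finset.Icc j (r - 1), Pbar k)
    ∧ (∀ᵐ ω ∂μ,
        Tendsto
          (fun n =>
            (1 / empSurv X (x j) n ω) * ∑ k ∈ Finset.Icc j (r - 1), empSurv X (x k) n ω)
          atTop
          (nhds ((1 / Pbar j) * ∑ k ∈ Finset.Icc j (r - 1), Pbar k))) := by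
  have hjI : j ∈ Icc 1 (r - 1) := mem_Icc.mpr ⟨hj1, hjr⟩
  have hsI : Icc j (r - 1) ⊆ Icc 1 (r - 1) := Icc_subset_Icc_left hj1
  have hPj : 0 < Pbar j := hpos j hjI
  have hcard : ((#(Icc j (r - 1)) : ℕ) : ℝ) = r - j := by
    rw [Nat.card_Icc, show r - 1 + 1 - j = r - j by omega, Nat.cast_sub (by omega)]
  have hae : ∀ᵐ ω ∂μ, ∀ k ∈ Icc 1 (r - 1),
      Tendsto (fun n => empSurv X (x k) n ω) atTop (𝓝 (Pbar k)) := by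
    refine (eventually_all_finset _).2 fun k hk => ?_
    have hreal : μ.real {ω | x k < X 0 ω} = Pbar k := by
      rw [measureReal_def, hsurv k hk, ENNReal.toReal_ofReal (hpos k hk).le]
    simpa only [hreal] using
      empSurv_tendsto_ae hmeas hindep hident (t := x k)
        (by rw [hsurv k hk]; exact ENNReal.ofReal_ne_top)
  refine ⟨?_, ?_⟩
  · filter_upwards [hae] with ω hω
    rw [← hcard]
    exact limsup_abs_ratio_sub_div_sup'_le (F := fun n k => empSurv X (x k) n ω) _ hsI hjI hPj
      (fun k hk => (hpos k (hsI hk)).le) (hω j hjI)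
  · filter_upwards [hae] with ω hω
    exact (tendsto_const_nhds.div (hω j hjI) hPj.ne').mul
      (tendsto_finsetSum _ fun k hk => hω k (hsI hk))

/-- almost sure convergence of the mean residual lifetime estimator, with
`limsup |μ_R^{(n)}(x_j) - μ_R(x_j)| / a_n(P̄) ≤ (r-j)/P̄(x_j) + (1/P̄(x_j)²) ∑_{k=j}^{r-1} P̄(x_k)`
a.s.; in particular `μ_R^{(n)}(x_j) → μ_R(x_j)` a.s. -/
theorem mean_residual_lifetime_estimator_as
    {Ω : Type*} [MeasurableSpace Ω] (μ : Measure Ω) [IsProbabilityMeasure μ]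
    (r : ℕ) (hr : 1 ≤ r - 1) (x : ℕ → ℝ) (hx : StrictMonoOn x (Set.Icc 1 r))
    (X : ℕ → Ω → ℝ)
    (hmeas : ∀ i, Measurable (X i))
    (hindep : iIndepFun X μ)
    (hident : ∀ i, Measure.map (X i) μ = Measure.map (X 0) μ)
    (Pbar : ℕ → ℝ)
    (hsurv : ∀ k ∈ Finset.Icc 1 (r - 1), μ {ω | x k < X 0 ω} = ENNReal.ofReal (Pbar k))
    (hpos : ∀ k ∈ Finset.Icc 1 (r - 1), 0 < Pbar k)
    (j : ℕ) (hj1 : 1 ≤ j) (hjr : j ≤ r - 1) :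
    (∀ᵐ ω ∂μ,
      Filter.limsup
        (fun n =>
          |(1 / empSurv X (x j) n ω) * ∑ k ∈ Finset.Icc j (r - 1), empSurv X (x k) n ω
            - (1 / Pbar j) * ∑ k ∈ Finset.Icc j (r - 1), Pbar k|
          / ((Finset.Icc 1 (r - 1)).sup' (Finset.nonempty_Icc.mpr hr)
              (fun k => |empSurv X (x k) n ω - Pbar k|)))
        atTop
      ≤ ((r : ℝ) - (j : ℝ)) / Pbar j
        + (1 / (Pbar j) ^ 2) * ∑ k ∈ Finset.Icc j (r - 1), Pbar k)
    ∧ (∀ᵐ ω ∂μ,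
        Tendsto
          (fun n =>
            (1 / empSurv X (x j) n ω) * ∑ k ∈ Finset.Icc j (r - 1), empSurv X (x k) n ω)
          atTop
          (nhds ((1 / Pbar j) * ∑ k ∈ Finset.Icc j (r - 1), Pbar k))) :=
  mean_residual_lifetime_estimator_as_general μ r hr x X hmeas hindep hident Pbar hsurv hpos j hj1
    hjr
end

section
/- Almost sure convergence of the mean inactivity lifetime estimator: for fixed j ∈ [1,r-1], limsup_{n→∞} |μ_P^{(n)}(x_j) - μ_P(x_j)| / a_n(P) ≤ j/P(x_j) + (1/P(x_j)²) ∑_{k=1}^{j} P(x_k) almost surely, where a_n(P) = max_j |P_n(x_j) - P(x_j)|. -/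
open MeasureTheory ProbabilityTheory Filter Finset Real

/-- Empirical cumulative distribution function at `t` of the first `n` observations. -/
noncomputable def empCDF {Ω : Type*} (X : ℕ → Ω → ℝ) (t : ℝ) (n : ℕ) (ω : Ω) : ℝ :=
  (∑ i ∈ Finset.range n, if X i ω ≤ t then (1 : ℝ) else 0) / n

/-!
By the strong law of large numbers, applied to the indicators of `{X i ≤ x k}`, every empirical
CDF value `F_n(x_k)` converges a.s. to `P(x_k)`. Deterministically, with `a = max_k |F_k - P_k|`,
`F_j⁻¹ ∑ F_k - P_j⁻¹ ∑ P_k = F_j⁻¹ ∑ (F_k - P_k) + (P_j - F_j) / (F_j P_j) ∑ P_k`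
is bounded by `(j / F_j + (F_j P_j)⁻¹ ∑ P_k) a`, and this factor tends to the claimed constant.
-/

theorem empCDF_tendsto_ae {Ω : Type*} [MeasurableSpace Ω] (μ : Measure Ω)
    (X : ℕ → Ω → ℝ) (hmeas : ∀ i, Measurable (X i)) (hindep : iIndepFun X μ)
    (hident : ∀ i, Measure.map (X i) μ = Measure.map (X 0) μ)
    (t : ℝ) (ht : μ {ω | X 0 ω ≤ t} ≠ ⊤) :
    ∀ᵐ ω ∂μ, Tendsto (fun n => empCDF X t n ω) atTop (nhds (μ.real {ω | X 0 ω ≤ t})) := by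
  set f : ℝ → ℝ := (Set.Iic t).indicator 1
  have hf : Measurable f := measurable_const.indicator measurableSet_Iic
  have hY0 : f ∘ X 0 = {ω | X 0 ω ≤ t}.indicator 1 := rfl
  have hset : MeasurableSet {ω | X 0 ω ≤ t} := hmeas 0 measurableSet_Iic
  have hint : Integrable (f ∘ X 0) μ := by
    rw [hY0, integrable_indicator_iff hset]
    exact integrableOn_const ht
  have hlaw := strong_law_ae_real (fun i => f ∘ X i) hint
    (fun i k hik => (hindep.indepFun hik).comp hf hf)
    (fun i => IdentDistrib.comp ⟨(hmeas i).aemeasurable, (hmeas 0).aemeasurable, hident i⟩ hf)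
  rw [hY0, integral_indicator_one hset] at hlaw
  filter_upwards [hlaw] with ω hω
  convert hω using 3 with n
  simp [empCDF, f, Set.indicator_apply]

theorem abs_one_div_mul_sum_sub_one_div_mul_sum_le {ι : Type*} (s : Finset ι) {F p : ι → ℝ}
    {u v a : ℝ} (hu : 0 < u) (hv : 0 < v) (huv : |u - v| ≤ a)
    (hFp : ∀ k ∈ s, |F k - p k| ≤ a) (hp : 0 ≤ ∑ k ∈ s, p k) :
    |1 / u * ∑ k ∈ s, F k - 1 / v * ∑ k ∈ s, p k|
      ≤ (#s / u + 1 / (u * v) * ∑ k ∈ s, p k) * a := by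
  set S := ∑ k ∈ s, p k
  have hdecomp : 1 / u * ∑ k ∈ s, F k - 1 / v * S
      = 1 / u * ∑ k ∈ s, (F k - p k) + (v - u) / (u * v) * S := by
    rw [sum_sub_distrib]
    field_simp
    ring
  have hsum : |∑ k ∈ s, (F k - p k)| ≤ #s * a :=
    calc |∑ k ∈ s, (F k - p k)| ≤ ∑ k ∈ s, |F k - p k| := abs_sum_le_sum_abs _ _
      _ ≤ ∑ _k ∈ s, a := sum_le_sum hFp
      _ = #s * a := by rw [sum_const, nsmul_eq_mul]
  calc |1 / u * ∑ k ∈ s, F k - 1 / v * S|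
      ≤ 1 / u * |∑ k ∈ s, (F k - p k)| + |v - u| / (u * v) * S := by
        rw [hdecomp]
        refine (abs_add_le _ _).trans_eq ?_
        rw [abs_mul, abs_mul, abs_of_pos (one_div_pos.2 hu), abs_div, abs_of_pos (mul_pos hu hv),
          abs_of_nonneg hp]
    _ ≤ 1 / u * (#s * a) + a / (u * v) * S := by
        gcongr
        rwa [abs_sub_comm]
    _ = (#s / u + 1 / (u * v) * S) * a := by ring

/-- `hg0` covers the steps with `a n = 0`, where `e n / a n` is the junk value `0`. -/
theorem limsup_div_le_of_eventually_le_mul {α : Type*} {l : Filter α} [l.NeBot]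
    {e a g : α → ℝ} {L : ℝ} (he : ∀ n, 0 ≤ e n) (ha : ∀ n, 0 ≤ a n)
    (hg : Tendsto g l (nhds L)) (hg0 : ∀ᶠ n in l, 0 ≤ g n)
    (hle : ∀ᶠ n in l, e n ≤ g n * a n) :
    limsup (fun n => e n / a n) l ≤ L :=
  calc limsup (fun n => e n / a n) l ≤ limsup g l :=
        limsup_le_limsup ((hg0.and hle).mono fun n h => div_le_of_le_mul₀ (ha n) h.1 h.2)
          (isCoboundedUnder_le_of_le l fun n => div_nonneg (he n) (ha n)) hg.isBoundedUnder_le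
    _ = L := hg.limsup_eq

theorem mean_inactivity_lifetime_estimator_as_general
    {Ω : Type*} [MeasurableSpace Ω] (μ : Measure Ω)
    (r : ℕ) (hr : 1 ≤ r) (x : ℕ → ℝ)
    (X : ℕ → Ω → ℝ)
    (hmeas : ∀ i, Measurable (X i))
    (hindep : iIndepFun X μ)
    (hident : ∀ i, Measure.map (X i) μ = Measure.map (X 0) μ)
    (P : ℕ → ℝ)
    (hcdf : ∀ k ∈ Finset.Icc 1 r, μ {ω | X 0 ω ≤ x k} = ENNReal.ofReal (P k))
    (hpos : ∀ k ∈ Finset.Icc 1 r, 0 < P k)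
    (j : ℕ) (hj1 : 1 ≤ j) (hjr : j ≤ r - 1) :
    ∀ᵐ ω ∂μ,
      Filter.limsup
        (fun n =>
          |(1 / empCDF X (x j) n ω) * ∑ k ∈ Finset.Icc 1 j, empCDF X (x k) n ω
            - (1 / P j) * ∑ k ∈ Finset.Icc 1 j, P k|
          / ((Finset.Icc 1 r).sup' (Finset.nonempty_Icc.mpr hr)
              (fun k => |empCDF X (x k) n ω - P k|)))
        atTop
      ≤ (j : ℝ) / P j + (1 / (P j) ^ 2) * ∑ k ∈ Finset.Icc 1 j, P k := by
  have hjr' : j ∈ Icc 1 r := mem_Icc.2 ⟨hj1, by omega⟩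
  have hsub : Icc 1 j ⊆ Icc 1 r := Icc_subset_Icc_right (by omega)
  have hPj : 0 < P j := hpos j hjr'
  have hS : 0 ≤ ∑ k ∈ Icc 1 j, P k := sum_nonneg fun k hk => (hpos k (hsub hk)).le
  have hconv : ∀ k ∈ Icc 1 r, ∀ᵐ ω ∂μ, Tendsto (fun n => empCDF X (x k) n ω) atTop (nhds (P k)) := by
    intro k hk
    have := empCDF_tendsto_ae μ X hmeas hindep hident (x k) (by simp [hcdf k hk])
    rwa [measureReal_def, hcdf k hk, ENNReal.toReal_ofReal (hpos k hk).le] at this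
  filter_upwards [(eventually_all_finset _).2 hconv] with ω hω
  have hFj := hω j hjr'
  have hFpos : ∀ᶠ n in atTop, 0 < empCDF X (x j) n ω := hFj.eventually (eventually_gt_nhds hPj)
  rw [sq]
  refine limsup_div_le_of_eventually_le_mul (fun n => abs_nonneg _)
    (fun n => (abs_nonneg _).trans (le_sup' (fun k => |empCDF X (x k) n ω - P k|) hjr'))
    (g := fun n => (j : ℝ) / empCDF X (x j) n ω
      + 1 / (empCDF X (x j) n ω * P j) * ∑ k ∈ Icc 1 j, P k) ?_ ?_ ?_
  · exact (tendsto_const_nhds.div hFj hPj.ne').add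
      ((tendsto_const_nhds.div (hFj.mul_const _) (mul_pos hPj hPj).ne').mul_const _)
  · exact hFpos.mono fun n hn => by positivity
  · filter_upwards [hFpos] with n hn
    simpa using abs_one_div_mul_sum_sub_one_div_mul_sum_le (Icc 1 j) hn hPj
      (le_sup' (fun k => |empCDF X (x k) n ω - P k|) hjr')
      (fun k hk => le_sup' (fun k => |empCDF X (x k) n ω - P k|) (hsub hk)) hS

/-- almost sure convergence of the mean inactivity lifetime estimator:
`limsup |μ_P^{(n)}(x_j) - μ_P(x_j)| / a_n(P) ≤ j/P(x_j) + (1/P(x_j)²) ∑_{k=1}^j P(x_k)` a.s. -/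
theorem mean_inactivity_lifetime_estimator_as
    {Ω : Type*} [MeasurableSpace Ω] (μ : Measure Ω) [IsProbabilityMeasure μ]
    (r : ℕ) (hr : 1 ≤ r) (x : ℕ → ℝ) (hx : StrictMonoOn x (Set.Icc 1 r))
    (X : ℕ → Ω → ℝ)
    (hmeas : ∀ i, Measurable (X i))
    (hindep : iIndepFun X μ)
    (hident : ∀ i, Measure.map (X i) μ = Measure.map (X 0) μ)
    (P : ℕ → ℝ)
    (hcdf : ∀ k ∈ Finset.Icc 1 r, μ {ω | X 0 ω ≤ x k} = ENNReal.ofReal (P k))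
    (hpos : ∀ k ∈ Finset.Icc 1 r, 0 < P k)
    (j : ℕ) (hj1 : 1 ≤ j) (hjr : j ≤ r - 1) :
    ∀ᵐ ω ∂μ,
      Filter.limsup
        (fun n =>
          |(1 / empCDF X (x j) n ω) * ∑ k ∈ Finset.Icc 1 j, empCDF X (x k) n ω
            - (1 / P j) * ∑ k ∈ Finset.Icc 1 j, P k|
          / ((Finset.Icc 1 r).sup' (Finset.nonempty_Icc.mpr hr)
              (fun k => |empCDF X (x k) n ω - P k|)))
        atTop
      ≤ (j : ℝ) / P j + (1 / (P j) ^ 2) * ∑ k ∈ Finset.Icc 1 j, P k :=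
  mean_inactivity_lifetime_estimator_as_general μ r hr x X hmeas hindep hident P hcdf hpos j hj1 hjr
end
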